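/- Let E be a real inner product space, θ, θ* ∈ E, η ∈ ℝ, N ≥ 1, and let g : {1,…,N} → E with g_i ≠ 0 for all i. For a sampling distribution q on {1,…,N}, define the convergence rate C(q) = −Σ_i q_i (‖θ − η • ((1/(N q_i)) • g_i) − θ*‖² − ‖θ − θ*‖²) of the importance-sampled SGD step. Let q*_i = ‖g_i‖ / (Σ_j ‖g_j‖). Then for every sampling distribution q, C(q*) ≥ C(q); i.e., sampling with probabilities proportional to the gradient norms maximizes the convergence rate of the importance-sampled SGD step. -/

import Mathlib

open Finset

lemma expand_sq {E : Type*} [NormedAddCommGroup E] [InnerProductSpace ℝ E]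
    (a gi : E) (c : ℝ) :
    ‖a - c • gi‖ ^ 2 - ‖a‖ ^ 2 = -(2 * c * inner ℝ a gi) + c ^ 2 * ‖gi‖ ^ 2 := by
  rw [@norm_sub_sq_real, real_inner_smul_right, norm_smul]
  simp [mul_pow, abs_mul_abs_self, sq_abs]
  ring

/-- Sampling with probabilities proportional to the gradient norms,
`q* i = ‖g i‖ / ∑ j, ‖g j‖`, maximizes the convergence rate
`C(q) = −∑ i, q i (‖θ − η • ((1/(N q i)) • g i) − θ*‖² − ‖θ − θ*‖²)`
of the importance-sampled SGD step. -/
theorem gradient_norm_sampling_maximizes_convergence_rate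
    {E : Type*} [NormedAddCommGroup E] [InnerProductSpace ℝ E]
    (θ θs : E) (η : ℝ) (N : ℕ) (hN : 1 ≤ N)
    (g : Fin N → E) (hg : ∀ i, g i ≠ 0)
    (q : Fin N → ℝ) (hq_pos : ∀ i, 0 < q i) (hq_sum : ∑ i, q i = 1) :
    (- ∑ i, (‖g i‖ / ∑ j, ‖g j‖) *
          (‖θ - η • ((1 / ((N : ℝ) * (‖g i‖ / ∑ j, ‖g j‖))) • g i) - θs‖ ^ 2
            - ‖θ - θs‖ ^ 2))
      ≥ - ∑ i, q i *
          (‖θ - η • ((1 / ((N : ℝ) * q i)) • g i) - θs‖ ^ 2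
            - ‖θ - θs‖ ^ 2) := by
  have hNE : Nonempty (Fin N) := Fin.pos_iff_nonempty.mp hN
  have hNpos : (0:ℝ) < N := by exact_mod_cast Nat.lt_of_lt_of_le Nat.zero_lt_one hN
  set a := θ - θs with ha
  set S : ℝ := ∑ j, ‖g j‖ with hS
  have hSpos : 0 < S :=
    Finset.sum_pos (fun i _ => norm_pos_iff.mpr (hg i)) Finset.univ_nonempty
  have hrw : ∀ i (c : ℝ), θ - η • ((1 / ((N:ℝ) * c)) • g i) - θs
      = a - (η / ((N:ℝ) * c)) • g i := by
    intro i c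
    rw [smul_smul, sub_right_comm, ha]
    ring_nf
  have expand : ∀ (p : Fin N → ℝ), (∀ i, 0 < p i) →
      - ∑ i, p i * (‖θ - η • ((1 / ((N:ℝ) * p i)) • g i) - θs‖ ^ 2 - ‖a‖ ^ 2)
      = (2 * η / N) * ∑ i, (inner ℝ a (g i) : ℝ)
        - (η ^ 2 / N ^ 2) * ∑ i, ‖g i‖ ^ 2 / p i := by
    intro p hp
    have : ∀ i, p i * (‖θ - η • ((1 / ((N:ℝ) * p i)) • g i) - θs‖ ^ 2 - ‖a‖ ^ 2)
        = -((2 * η / N) * (inner ℝ a (g i) : ℝ)) + (η ^ 2 / N ^ 2) * (‖g i‖ ^ 2 / p i) := by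
      intro i
      rw [hrw i (p i), expand_sq]
      have hpi := (hp i).ne'
      field_simp
    simp only [this, Finset.sum_add_distrib, Finset.sum_neg_distrib, ← Finset.mul_sum]
    ring
  rw [expand q hq_pos, expand (fun i => ‖g i‖ / S) (fun i => div_pos (norm_pos_iff.mpr (hg i)) hSpos)]
  have key : ∑ i, ‖g i‖ ^ 2 / (‖g i‖ / S) ≤ ∑ i, ‖g i‖ ^ 2 / q i := by
    have h1 : ∑ i, ‖g i‖ ^ 2 / (‖g i‖ / S) = S ^ 2 := by
      have : ∀ i, ‖g i‖ ^ 2 / (‖g i‖ / S) = ‖g i‖ * S := by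
        intro i
        have := (norm_pos_iff.mpr (hg i)).ne'
        field_simp
      simp only [this, ← Finset.sum_mul, ← hS]
      ring
    rw [h1]
    have hCS := Finset.sum_mul_sq_le_sq_mul_sq Finset.univ
        (fun i => Real.sqrt (q i)) (fun i => ‖g i‖ / Real.sqrt (q i))
    have e1 : ∀ i : Fin N, Real.sqrt (q i) * (‖g i‖ / Real.sqrt (q i)) = ‖g i‖ := by
      intro i
      have : Real.sqrt (q i) ≠ 0 := (Real.sqrt_pos.mpr (hq_pos i)).ne'
      field_simp
    have e2 : ∀ i : Fin N, Real.sqrt (q i) ^ 2 = q i := fun i =>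
      Real.sq_sqrt (hq_pos i).le
    have e3 : ∀ i : Fin N, (‖g i‖ / Real.sqrt (q i)) ^ 2 = ‖g i‖ ^ 2 / q i := by
      intro i
      rw [div_pow, e2]
    simp only [e1, e2, e3, hq_sum, one_mul] at hCS
    exact hCS
  have hfac : 0 ≤ η ^ 2 / (N:ℝ) ^ 2 := by positivity
  nlinarith [mul_le_mul_of_nonneg_left key hfac]
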